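/- arXiv:2404.13444 — 6 statements merged into one kernel-verified Lean document; each statement's English description precedes it below -/
import Mathlib

section
/- Let (c_{j,n})_{0 ≤ j ≤ n} be real numbers such that lim_{n→∞} max_{0 ≤ j ≤ n} |c_{j,n}| = 0, lim_{n→∞} ∑_{j=0}^{n} c_{j,n} = λ for some real λ, and sup_{n} ∑_{j=0}^{n} |c_{j,n}| < ∞. Then lim_{n→∞} ∏_{j=0}^{n} (1 + c_{j,n}) = e^{λ}. -/
open Filter Topology

/-! The logarithms turn the product into `∑ log (1 + c_{j,n})`, and `log (1 + x) = x + O(x²)` for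
small `x`. The total error is at most `2 · max_j |c_{j,n}| · ∑_j |c_{j,n}|`, which tends to `0`
because the maximum does and the absolute sums stay bounded; so the sums of logarithms tend to `λ`
and the products to `e^λ`. -/

namespace Real

lemma abs_log_one_add_sub_self_le {x : ℝ} (hx : |x| ≤ 1 / 2) :
    |log (1 + x) - x| ≤ 2 * x ^ 2 := by
  have hx' : |-x| < 1 := by rw [abs_neg]; linarith
  have htaylor := abs_log_sub_add_sum_range_le hx' 1
  norm_num [abs_neg, neg_div, neg_add_eq_sub, add_comm (1 : ℝ) x] at htaylor
  rw [add_comm 1 x]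
  calc |log (x + 1) - x| ≤ x ^ 2 / (1 - |x|) := htaylor
    _ ≤ 2 * x ^ 2 := by
      rw [div_le_iff₀ (by linarith)]
      nlinarith [sq_nonneg x]

lemma abs_sum_log_one_add_sub_sum_le {ι : Type*} (s : Finset ι) (x : ι → ℝ) {δ : ℝ}
    (hδ : δ ≤ 1 / 2) (hx : ∀ j ∈ s, |x j| ≤ δ) :
    |∑ j ∈ s, log (1 + x j) - ∑ j ∈ s, x j| ≤ 2 * δ * ∑ j ∈ s, |x j| := by
  rw [← Finset.sum_sub_distrib, Finset.mul_sum]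
  refine (Finset.abs_sum_le_sum_abs _ _).trans (Finset.sum_le_sum fun j hj => ?_)
  calc |log (1 + x j) - x j| ≤ 2 * x j ^ 2 := abs_log_one_add_sub_self_le ((hx j hj).trans hδ)
    _ = 2 * |x j| * |x j| := by rw [← sq_abs]; ring
    _ ≤ 2 * δ * |x j| := by gcongr; exact hx j hj

lemma prod_one_add_eq_exp_sum_log {ι : Type*} (s : Finset ι) (x : ι → ℝ)
    (hx : ∀ j ∈ s, -1 < x j) : ∏ j ∈ s, (1 + x j) = exp (∑ j ∈ s, log (1 + x j)) := by
  rw [exp_sum]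
  exact Finset.prod_congr rfl fun j hj => (exp_log (by linarith [hx j hj])).symm

theorem tendsto_prod_one_add_of_tendsto_sum {α ι : Type*} {l : Filter α} {s : α → Finset ι}
    {x : α → ι → ℝ} {m : α → ℝ} {lam M : ℝ} (hxm : ∀ᶠ a in l, ∀ j ∈ s a, |x a j| ≤ m a)
    (hm : Tendsto m l (𝓝 0)) (hsum : Tendsto (fun a => ∑ j ∈ s a, x a j) l (𝓝 lam))
    (hM : ∀ᶠ a in l, ∑ j ∈ s a, |x a j| ≤ M) :
    Tendsto (fun a => ∏ j ∈ s a, (1 + x a j)) l (𝓝 (exp lam)) := by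
  have hsmall : ∀ᶠ a in l, |m a| ≤ 1 / 2 :=
    (tendsto_zero_iff_abs_tendsto_zero m).mp hm |>.eventually (eventually_le_nhds (by norm_num))
  have hxm' : ∀ᶠ a in l, ∀ j ∈ s a, |x a j| ≤ |m a| := by
    filter_upwards [hxm] with a ha j hj using (ha j hj).trans (le_abs_self _)
  have hlog : Tendsto (fun a => ∑ j ∈ s a, log (1 + x a j)) l (𝓝 lam) := by
    refine hsum.congr_dist (squeeze_zero' (.of_forall fun _ => dist_nonneg) ?_
      (by simpa using ((tendsto_zero_iff_abs_tendsto_zero m).mp hm).const_mul 2 |>.mul_const M))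
    filter_upwards [hsmall, hxm', hM] with a hsmall hxm hM
    rw [dist_comm, Real.dist_eq]
    calc _ ≤ 2 * |m a| * ∑ j ∈ s a, |x a j| := abs_sum_log_one_add_sub_sum_le _ _ hsmall hxm
      _ ≤ 2 * |m a| * M := by gcongr
  refine ((continuous_exp.tendsto lam).comp hlog).congr' ?_
  filter_upwards [hsmall, hxm'] with a hsmall hxm
  refine (prod_one_add_eq_exp_sum_log _ _ fun j hj => ?_).symm
  linarith [neg_abs_le (x a j), hxm j hj]

end Real

/-- Durrett, Exercise 3.1.1: if a triangular array `c_{j,n}` (`0 ≤ j ≤ n`) satisfies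
`max_{0 ≤ j ≤ n} |c_{j,n}| → 0`, `∑_{j=0}^n c_{j,n} → λ`, and
`sup_n ∑_{j=0}^n |c_{j,n}| < ∞`, then `∏_{j=0}^n (1 + c_{j,n}) → e^λ`. -/
theorem triangular_array_product_tendsto_exp
    (c : ℕ → ℕ → ℝ) (lam : ℝ)
    (hmax : Tendsto
      (fun n => (Finset.range (n + 1)).sup' Finset.nonempty_range_add_one (fun j => |c n j|))
      atTop (nhds 0))
    (hsum : Tendsto (fun n => ∑ j ∈ Finset.range (n + 1), c n j) atTop (nhds lam))
    (hbdd : ∃ M : ℝ, ∀ n, ∑ j ∈ Finset.range (n + 1), |c n j| ≤ M) :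
    Tendsto (fun n => ∏ j ∈ Finset.range (n + 1), (1 + c n j)) atTop
      (nhds (Real.exp lam)) := by
  obtain ⟨M, hM⟩ := hbdd
  exact Real.tendsto_prod_one_add_of_tendsto_sum
    (.of_forall fun n j hj => Finset.le_sup' (fun j => |c n j|) hj) hmax hsum (.of_forall hM)
end

section
/- For every real number a there exists a constant D > 0 such that for all integers N ≥ 1 and all integers k with |k| ≤ N^{5/6} and |k + ⌊a√N⌋| ≤ N^{5/6}, one has exp(−2ak/√N) · C(2N, N+k) ≤ D · C(2N, N+k+⌊a√N⌋). -/
/-!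
Since `C(2N, N+m) / C(2N, N+m+1) = (1+x)/(1-x)` with `x = (2m+1)/(2N+1)`, and
`log ((1+x)/(1-x)) = 2x + O(x³)`, the function `m ↦ log C(2N, N+m) + 2m²/(2N+1)` moves by at
most `4 (B/N)³` per unit step while `|m| ≤ B ≤ N/2`. For `B = N^{5/6}` and a shift of
`s = ⌊a√N⌋` steps the accumulated error is `O(|s| / √N) = O(1)`, and the Gaussian part
`2((k+s)² - k²)/(2N+1)` equals `2ak/√N` up to `O(1)`. When `N < 64` every quantity involved is
bounded in terms of `a` alone.
-/

open Real

theorem abs_log_one_add_div_one_sub_sub_le {x : ℝ} (hx : |x| ≤ 1 / 2) :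
    |log ((1 + x) / (1 - x)) - 2 * x| ≤ 4 * |x| ^ 3 := by
  have hcube : |x| ^ 3 / (1 - |x|) ≤ 2 * |x| ^ 3 := by
    rw [div_le_iff₀ (by linarith)]
    nlinarith [pow_nonneg (abs_nonneg x) 3]
  have hminus := abs_log_sub_add_sum_range_le (by linarith : |x| < 1) 2
  have hplus := abs_log_sub_add_sum_range_le (x := -x) (by rw [abs_neg]; linarith) 2
  simp only [Finset.sum_range_succ, Finset.sum_range_zero, abs_neg, sub_neg_eq_add,
    abs_le] at hminus hplus
  rw [log_div (by linarith [neg_abs_le x]) (by linarith [le_abs_self x]), abs_le]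
  constructor <;> nlinarith [hminus.1, hminus.2, hplus.1, hplus.2]

theorem Nat.choose_div_choose_succ {n p : ℕ} (hp : p < n) :
    (n.choose p : ℝ) / n.choose (p + 1) = (p + 1) / (n - p) := by
  have hpos : (0 : ℝ) < n.choose (p + 1) := by exact_mod_cast Nat.choose_pos hp
  have hsub : (0 : ℝ) < n - p := by rw [sub_pos]; exact_mod_cast hp
  rw [div_eq_div_iff hpos.ne' hsub.ne', ← Nat.cast_sub hp.le]
  exact_mod_cast (Nat.choose_succ_right_eq n p).symm.trans (mul_comm _ _)

theorem choose_two_mul_pos_of_abs_le {N : ℕ} {m : ℤ} (hm : |m| ≤ N) :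
    (0 : ℝ) < (2 * N).choose ((N : ℤ) + m).toNat := by
  have := abs_le.1 hm
  exact_mod_cast Nat.choose_pos (by omega)

theorem abs_sub_le_mul_of_abs_sub_succ_le {f : ℤ → ℝ} {i j : ℤ} {c : ℝ} (hij : i ≤ j)
    (hf : ∀ m, i ≤ m → m < j → |f m - f (m + 1)| ≤ c) : |f i - f j| ≤ c * (j - i) := by
  obtain ⟨n, hn⟩ := Int.eq_ofNat_of_zero_le (sub_nonneg.2 hij)
  obtain rfl : j = i + n := by omega
  have := dist_le_range_sum_of_dist_le (f := fun l : ℕ ↦ f (i + l)) (d := fun _ ↦ c) n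
    fun {l} hl ↦ by simpa [Real.dist_eq, add_assoc] using hf (i + l) (by omega) (by omega)
  simpa [Real.dist_eq, mul_comm] using this

noncomputable def gaussCorrectedLogChoose (N : ℕ) (m : ℤ) : ℝ :=
  log ((2 * N).choose ((N : ℤ) + m).toNat) + 2 * m ^ 2 / (2 * N + 1)

theorem abs_gaussCorrectedLogChoose_sub_succ_le {N : ℕ} {m : ℤ} (hm : |2 * m + 1| ≤ N) :
    |gaussCorrectedLogChoose N m - gaussCorrectedLogChoose N (m + 1)|
      ≤ 4 * |(2 * m + 1 : ℝ) / (2 * N + 1)| ^ 3 := by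
  obtain ⟨hlo, hhi⟩ := abs_le.1 hm
  set p := ((N : ℤ) + m).toNat with hp
  have hpm : (p : ℝ) = N + m := by exact_mod_cast Int.toNat_of_nonneg (by omega)
  have hsucc : ((N : ℤ) + (m + 1)).toNat = p + 1 := by omega
  have hpN : p < 2 * N := by omega
  have hN : (0 : ℝ) < 2 * N + 1 := by positivity
  set x : ℝ := (2 * m + 1) / (2 * N + 1) with hx
  have hratio : ((2 * N).choose p : ℝ) / (2 * N).choose (p + 1) = (1 + x) / (1 - x) := by
    have hplus : 1 + x = 2 * (N + m + 1) / (2 * N + 1) := by rw [hx]; field_simp; ring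
    have hminus : 1 - x = 2 * (N - m) / (2 * N + 1) := by rw [hx]; field_simp; ring
    have hden : ((2 * N : ℕ) : ℝ) - p = N - m := by push_cast; rw [hpm]; ring
    rw [Nat.choose_div_choose_succ hpN, hden, hpm, hplus, hminus]
    field_simp
  have hxle : |x| ≤ 1 / 2 := by
    have : |(2 * m + 1 : ℝ)| ≤ N := by exact_mod_cast hm
    rw [hx, abs_div, abs_of_pos hN, div_le_iff₀ hN]
    linarith
  have hdiff : gaussCorrectedLogChoose N m - gaussCorrectedLogChoose N (m + 1)
      = log ((1 + x) / (1 - x)) - 2 * x := by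
    have hpos : ∀ q, q ≤ 2 * N → (0 : ℝ) < (2 * N).choose q := fun q hq ↦ by
      exact_mod_cast Nat.choose_pos hq
    rw [← hratio, log_div (hpos _ hpN.le).ne' (hpos _ hpN).ne', gaussCorrectedLogChoose,
      gaussCorrectedLogChoose, ← hp, hsucc, hx]
    push_cast
    field_simp
    ring
  rw [hdiff]
  exact abs_log_one_add_div_one_sub_sub_le hxle

theorem abs_gaussCorrectedLogChoose_sub_le {N : ℕ} {B : ℝ} (hB : 2 * B ≤ N) {i j : ℤ}
    (hi : |(i : ℝ)| ≤ B) (hj : |(j : ℝ)| ≤ B) :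
    |gaussCorrectedLogChoose N i - gaussCorrectedLogChoose N j|
      ≤ 4 * (B / N) ^ 3 * |(j - i : ℝ)| := by
  wlog hij : i ≤ j generalizing i j
  · rw [abs_sub_comm, abs_sub_comm (j : ℝ)]
    exact this hj hi (by omega)
  rw [abs_of_nonneg (sub_nonneg.2 (by exact_mod_cast hij : (i : ℝ) ≤ j))]
  refine abs_sub_le_mul_of_abs_sub_succ_le hij fun m him hmj ↦ ?_
  have hlo : -B ≤ m := (neg_le_of_abs_le hi).trans (by exact_mod_cast him)
  have hhi : (m : ℝ) + 1 ≤ B := by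
    have : (m : ℝ) + 1 ≤ j := by exact_mod_cast hmj
    linarith [le_of_abs_le hj]
  have hm : |(2 * m + 1 : ℝ)| ≤ 2 * B := abs_le.2 ⟨by linarith, by linarith⟩
  have hN : (0 : ℝ) < N := by linarith
  have h2N : (0 : ℝ) < 2 * N + 1 := by positivity
  refine (abs_gaussCorrectedLogChoose_sub_succ_le (by exact_mod_cast hm.trans hB)).trans ?_
  gcongr
  rw [abs_div, abs_of_pos h2N, div_le_div_iff₀ h2N hN]
  nlinarith

theorem choose_le_exp_mul_choose {N : ℕ} {B : ℝ} (hB : 2 * B ≤ N) {i j : ℤ}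
    (hi : |(i : ℝ)| ≤ B) (hj : |(j : ℝ)| ≤ B) :
    ((2 * N).choose ((N : ℤ) + i).toNat : ℝ)
      ≤ exp (2 * (j ^ 2 - i ^ 2) / (2 * N + 1) + 4 * (B / N) ^ 3 * |(j - i : ℝ)|)
        * (2 * N).choose ((N : ℤ) + j).toNat := by
  have hpos : ∀ m : ℤ, |(m : ℝ)| ≤ B → (0 : ℝ) < (2 * N).choose ((N : ℤ) + m).toNat :=
    fun m hm ↦ choose_two_mul_pos_of_abs_le (by exact_mod_cast (show |(m : ℝ)| ≤ N by
      linarith [abs_nonneg (m : ℝ)]))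
  have hQ := le_of_abs_le (abs_gaussCorrectedLogChoose_sub_le hB hi hj)
  unfold gaussCorrectedLogChoose at hQ
  have hsplit : 2 * (j ^ 2 - i ^ 2 : ℝ) / (2 * N + 1)
      = 2 * j ^ 2 / (2 * N + 1) - 2 * i ^ 2 / (2 * N + 1) := by ring
  rw [← exp_log (hpos i hi), ← exp_log (hpos j hj), ← exp_add, exp_le_exp]
  linarith

theorem gaussian_exponent_le {a r : ℝ} (hr : 1 ≤ r) {k s : ℤ} (hk : |(k : ℝ)| ≤ r ^ 2)
    (hs : (s : ℝ) ≤ a * r) (hs' : a * r - 1 < s) :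
    -2 * a * k / r + (2 * ((k + s : ℝ) ^ 2 - k ^ 2) / (2 * r ^ 2 + 1) + 4 * |(s : ℝ)| / r)
      ≤ (|a| + 4) ^ 2 := by
  have hr0 : 0 < r := by linarith
  have hden : 0 < 2 * r ^ 2 + 1 := by positivity
  have ha := abs_nonneg a
  have hsabs : |(s : ℝ)| ≤ (|a| + 1) * r := by
    rw [abs_le]; constructor <;> nlinarith [neg_abs_le a, le_abs_self a]
  have hcross : -2 * a * k / r + 4 * k * s / (2 * r ^ 2 + 1) ≤ |a| + 2 := by
    have heq : -2 * a * k / r + 4 * k * s / (2 * r ^ 2 + 1)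
        = 2 * (k * (2 * r * (s - a * r) - a)) / (r * (2 * r ^ 2 + 1)) := by
      field_simp; ring
    have hw : |2 * r * (s - a * r) - a| ≤ 2 * r + |a| := by
      refine (abs_sub _ _).trans (add_le_add_left ?_ _)
      rw [abs_mul, abs_of_pos (by positivity)]
      exact mul_le_of_le_one_right (by positivity) (abs_le.2 ⟨by linarith, by linarith⟩)
    have hkw : k * (2 * r * (s - a * r) - a) ≤ r ^ 2 * (2 * r + |a|) :=
      (le_abs_self _).trans
        (by rw [abs_mul]; exact mul_le_mul hk hw (abs_nonneg _) (by positivity))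
    rw [heq, div_le_iff₀ (by positivity)]
    nlinarith [mul_le_mul_of_nonneg_left hr (mul_nonneg ha (sq_nonneg r))]
  have hsq : 2 * (s : ℝ) ^ 2 / (2 * r ^ 2 + 1) ≤ (|a| + 1) ^ 2 := by
    have : (s : ℝ) ^ 2 ≤ ((|a| + 1) * r) ^ 2 := by
      rw [← sq_abs]; exact pow_le_pow_left₀ (abs_nonneg _) hsabs 2
    rw [div_le_iff₀ hden]
    nlinarith
  have hlin : 4 * |(s : ℝ)| / r ≤ 4 * (|a| + 1) := by
    rw [div_le_iff₀ hr0]; linarith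
  have hsplit : 2 * ((k + s : ℝ) ^ 2 - k ^ 2) / (2 * r ^ 2 + 1)
      = 4 * k * s / (2 * r ^ 2 + 1) + 2 * (s : ℝ) ^ 2 / (2 * r ^ 2 + 1) := by ring
  rw [hsplit]
  nlinarith

theorem exists_pow_six_eq {x : ℝ} (hx : 1 ≤ x) :
    ∃ t : ℝ, 1 ≤ t ∧ x = t ^ 6 ∧ x ^ ((5 : ℝ) / 6) = t ^ 5 ∧ √x = t ^ 3 := by
  have hpow : ∀ n : ℕ, (x ^ ((1 : ℝ) / 6)) ^ n = x ^ ((n : ℝ) / 6) := fun n ↦ by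
    rw [← rpow_natCast, ← rpow_mul (by linarith)]; ring_nf
  refine ⟨x ^ ((1 : ℝ) / 6), one_le_rpow hx (by norm_num), ?_, ?_, ?_⟩
  · rw [hpow]; norm_num
  · rw [hpow]; norm_num
  · rw [hpow, sqrt_eq_rpow]; norm_num

theorem exp_mul_choose_le_of_lt_two {a t : ℝ} (ht : 1 ≤ t) (ht2 : t < 2) {N : ℕ}
    (hN : (N : ℝ) = t ^ 6) {k : ℤ} (hk : |(k : ℝ)| ≤ t ^ 5) (n : ℕ) :
    exp (-2 * a * k / t ^ 3) * (2 * N).choose n ≤ exp (8 * |a|) * 2 ^ 128 := by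
  have ht0 : 0 < t := by linarith
  gcongr
  · have ht2sq : t ^ 2 ≤ 4 := by nlinarith
    rw [div_le_iff₀ (by positivity)]
    calc -2 * a * k ≤ |-2 * a * k| := le_abs_self _
      _ = 2 * |a| * |(k : ℝ)| := by simp [abs_mul]
      _ ≤ 2 * |a| * (t ^ 2 * t ^ 3) := by rw [← pow_add]; gcongr
      _ ≤ 2 * |a| * (4 * t ^ 3) := by gcongr
      _ = 8 * |a| * t ^ 3 := by ring
  · have hN64 : N ≤ 64 := by
      have : (N : ℝ) ≤ 64 := by rw [hN]; nlinarith [pow_le_pow_left₀ ht0.le ht2.le 6]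
      exact_mod_cast this
    calc ((2 * N).choose n : ℝ) ≤ ((2 ^ (2 * N) : ℕ) : ℝ) := by
          exact_mod_cast Nat.choose_le_two_pow _ _
      _ ≤ 2 ^ 128 := by push_cast; exact pow_le_pow_right₀ (by norm_num) (by omega)

theorem exp_mul_choose_le_of_two_le {a t : ℝ} (ht : 2 ≤ t) {N : ℕ} (hN : (N : ℝ) = t ^ 6)
    {k : ℤ} (hk : |(k : ℝ)| ≤ t ^ 5) (hks : |((k + ⌊a * t ^ 3⌋ : ℤ) : ℝ)| ≤ t ^ 5) :
    exp (-2 * a * k / t ^ 3) * (2 * N).choose ((N : ℤ) + k).toNat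
      ≤ exp ((|a| + 4) ^ 2) * (2 * N).choose ((N : ℤ) + k + ⌊a * t ^ 3⌋).toNat := by
  set s := ⌊a * t ^ 3⌋
  have h2B : 2 * t ^ 5 ≤ N := by
    rw [hN, pow_succ _ 5]; nlinarith [pow_pos (by linarith : (0 : ℝ) < t) 5]
  have hchoose := choose_le_exp_mul_choose h2B hk hks
  have hE : 2 * (((k + s : ℤ) : ℝ) ^ 2 - (k : ℝ) ^ 2) / (2 * N + 1)
      + 4 * (t ^ 5 / N) ^ 3 * |((k + s : ℤ) : ℝ) - k|
      = 2 * ((k + s : ℝ) ^ 2 - k ^ 2) / (2 * (t ^ 3) ^ 2 + 1) + 4 * |(s : ℝ)| / t ^ 3 := by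
    rw [hN]; push_cast; rw [add_sub_cancel_left]; field_simp
  rw [hE, ← add_assoc] at hchoose
  have hexp := gaussian_exponent_le (r := t ^ 3) (one_le_pow₀ (by linarith)) (k := k) (s := s)
    (by rw [← pow_mul]; exact hk.trans (pow_le_pow_right₀ (by linarith) (by norm_num)))
    (Int.floor_le _) (Int.sub_one_lt_floor _)
  calc exp (-2 * a * k / t ^ 3) * (2 * N).choose ((N : ℤ) + k).toNat
      ≤ exp (-2 * a * k / t ^ 3) * (exp (2 * ((k + s : ℝ) ^ 2 - k ^ 2) / (2 * (t ^ 3) ^ 2 + 1)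
          + 4 * |(s : ℝ)| / t ^ 3) * (2 * N).choose ((N : ℤ) + k + s).toNat) := by gcongr
    _ ≤ exp ((|a| + 4) ^ 2) * (2 * N).choose ((N : ℤ) + k + s).toNat := by
      rw [← mul_assoc, ← exp_add]; gcongr

/-- For every real `a` there is a constant `D > 0` such that for all integers `N ≥ 1` and all
integers `k` with `|k| ≤ N^{5/6}` and `|k + ⌊a√N⌋| ≤ N^{5/6}`,
`exp(−2ak/√N) · C(2N, N+k) ≤ D · C(2N, N+k+⌊a√N⌋)`. -/
theorem binomial_shift_bound (a : ℝ) :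
    ∃ D : ℝ, 0 < D ∧ ∀ N : ℕ, 1 ≤ N → ∀ k : ℤ,
      |(k : ℝ)| ≤ (N : ℝ) ^ ((5 : ℝ) / 6) →
      |((k + ⌊a * Real.sqrt N⌋ : ℤ) : ℝ)| ≤ (N : ℝ) ^ ((5 : ℝ) / 6) →
      Real.exp (-2 * a * k / Real.sqrt N) * ((2 * N).choose ((N : ℤ) + k).toNat : ℝ)
        ≤ D * ((2 * N).choose ((N : ℤ) + k + ⌊a * Real.sqrt N⌋).toNat : ℝ) := by
  refine ⟨exp ((|a| + 4) ^ 2) + exp (8 * |a|) * 2 ^ 128, by positivity, ?_⟩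
  intro N hN k hk hks
  obtain ⟨t, ht, hNt, hB, hr⟩ := exists_pow_six_eq (by exact_mod_cast hN : (1 : ℝ) ≤ N)
  rw [hB] at hk hks
  rw [hr] at hks ⊢
  have hts : t ^ 5 ≤ N := by rw [hNt]; exact pow_le_pow_right₀ ht (by norm_num)
  have hone : (1 : ℝ) ≤ (2 * N).choose ((N : ℤ) + k + ⌊a * t ^ 3⌋).toNat := by
    rw [add_assoc]
    exact_mod_cast choose_two_mul_pos_of_abs_le (by exact_mod_cast hks.trans hts)
  rcases lt_or_ge t 2 with ht2 | ht2
  · have hsmall := exp_mul_choose_le_of_lt_two (a := a) ht ht2 hNt hk ((N : ℤ) + k).toNat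
    nlinarith [exp_pos ((|a| + 4) ^ 2), exp_pos (8 * |a|)]
  · refine (exp_mul_choose_le_of_two_le ht2 hNt hk hks).trans ?_
    gcongr
    exact le_add_of_nonneg_right (by positivity)
end

section
/- For every integer N ≥ 1 and every integer k with |k| ≤ N, one has 4^{−N} · C(2N, N+k) ≤ N^{−1/2} · exp(−k²/(2N)). -/
/-!
Both factors of the bound come from ratios of consecutive binomial coefficients. Moving one step
away from the centre multiplies `C(2N, N + m)` by
`(N - m) / (N + m + 1) = 1 - (2m + 1) / (N + m + 1)`, which is at most `exp (-(2m + 1) / (2N))`;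
the exponents telescope to `-j² / (2N)`. For the centre, `(2n + 1) C(2n, n)²` grows by the factor
`4 (2n + 1) (2n + 3) / (n + 1)² ≤ 16` per step, so it is at most `16ⁿ`, which gives
`C(2n, n) ≤ 4ⁿ / √n`.
-/

open Real

theorem Nat.two_mul_add_one_mul_centralBinom_sq_le (n : ℕ) :
    (2 * n + 1) * centralBinom n ^ 2 ≤ 16 ^ n := by
  induction n with
  | zero => simp
  | succ n ih =>
    have key : (n + 1) ^ 2 * ((2 * (n + 1) + 1) * centralBinom (n + 1) ^ 2)
        ≤ (n + 1) ^ 2 * 16 ^ (n + 1) :=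
      calc (n + 1) ^ 2 * ((2 * (n + 1) + 1) * centralBinom (n + 1) ^ 2)
          = (2 * n + 3) * ((n + 1) * centralBinom (n + 1)) ^ 2 := by ring
        _ = 4 * ((2 * n + 1) * (2 * n + 3)) * ((2 * n + 1) * centralBinom n ^ 2) := by
          rw [succ_mul_centralBinom_succ]; ring
        _ ≤ 4 * (2 * n + 2) ^ 2 * 16 ^ n :=
          Nat.mul_le_mul (Nat.mul_le_mul_left _ (by nlinarith)) ih
        _ = (n + 1) ^ 2 * 16 ^ (n + 1) := by ring
    exact Nat.le_of_mul_le_mul_left key (by positivity)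

theorem Nat.inv_four_pow_mul_centralBinom_le {n : ℕ} (hn : n ≠ 0) :
    ((4 : ℝ) ^ n)⁻¹ * centralBinom n ≤ (n : ℝ) ^ (-(1 / 2 : ℝ)) := by
  have hsq : (n : ℝ) * (centralBinom n : ℝ) ^ 2 ≤ ((4 : ℝ) ^ n) ^ 2 := by
    calc (n : ℝ) * (centralBinom n : ℝ) ^ 2
        ≤ (2 * n + 1) * (centralBinom n : ℝ) ^ 2 := by gcongr; linarith
      _ ≤ (16 : ℝ) ^ n := by exact_mod_cast two_mul_add_one_mul_centralBinom_sq_le n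
      _ = ((4 : ℝ) ^ n) ^ 2 := by rw [← pow_mul, mul_comm, pow_mul]; norm_num
  have hroot : √(n : ℝ) * centralBinom n ≤ (4 : ℝ) ^ n := by
    rw [← sqrt_sq (by positivity : (0 : ℝ) ≤ centralBinom n),
      ← sqrt_mul (Nat.cast_nonneg n), ← sqrt_sq (by positivity : (0 : ℝ) ≤ 4 ^ n)]
    exact Real.sqrt_le_sqrt hsq
  have hn' : (0 : ℝ) < √(n : ℝ) := Real.sqrt_pos.2 (by positivity)
  rw [rpow_neg (Nat.cast_nonneg n), ← sqrt_eq_rpow, inv_mul_le_iff₀ (by positivity),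
    ← div_eq_mul_inv, le_div_iff₀ hn']
  linarith

theorem one_sub_div_le_exp_neg_div {a b c : ℝ} (ha : 0 ≤ a) (hb : 0 < b) (hbc : b ≤ c) :
    1 - a / b ≤ exp (-(a / c)) :=
  (one_sub_le_exp_neg _).trans (exp_le_exp.2 (neg_le_neg (div_le_div_of_nonneg_left ha hb hbc)))

theorem choose_two_mul_add_succ_le {N m : ℕ} (hm : m < N) :
    ((2 * N).choose (N + m + 1) : ℝ)
      ≤ (2 * N).choose (N + m) * exp (-((2 * m + 1) / (2 * N))) := by
  have hrec : ((2 * N).choose (N + m + 1) : ℝ) * (N + m + 1)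
      = (2 * N).choose (N + m) * (N - m) := by
    have h := Nat.choose_succ_right_eq (2 * N) (N + m)
    rw [show 2 * N - (N + m) = N - m by omega] at h
    rw [← Nat.cast_sub hm.le]
    exact_mod_cast h
  have hratio : ((N : ℝ) - m) / (N + m + 1) = 1 - (2 * m + 1) / (N + m + 1) := by
    field_simp; ring
  have hle : (N : ℝ) + m + 1 ≤ 2 * N := by
    have : (m : ℝ) + 1 ≤ N := by exact_mod_cast hm
    linarith
  calc ((2 * N).choose (N + m + 1) : ℝ)
      = (2 * N).choose (N + m) * ((N - m) / (N + m + 1)) := by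
        rw [mul_div_assoc', eq_div_iff (by positivity), hrec]
    _ ≤ (2 * N).choose (N + m) * exp (-((2 * m + 1) / (2 * N))) := by
        rw [hratio]
        gcongr
        exact one_sub_div_le_exp_neg_div (by positivity) (by positivity) hle

theorem choose_two_mul_add_le {N j : ℕ} (hj : j ≤ N) :
    ((2 * N).choose (N + j) : ℝ) ≤ Nat.centralBinom N * exp (-(j : ℝ) ^ 2 / (2 * N)) := by
  induction j with
  | zero => simp [Nat.centralBinom_eq_two_mul_choose]
  | succ m ih =>
    have hexp : -((m : ℝ) + 1) ^ 2 / (2 * N)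
        = -(m : ℝ) ^ 2 / (2 * N) + -((2 * m + 1) / (2 * N)) := by ring
    calc ((2 * N).choose (N + (m + 1)) : ℝ)
        ≤ (2 * N).choose (N + m) * exp (-((2 * m + 1) / (2 * N))) :=
          choose_two_mul_add_succ_le hj
      _ ≤ Nat.centralBinom N * exp (-(m : ℝ) ^ 2 / (2 * N))
            * exp (-((2 * m + 1) / (2 * N))) := by gcongr; exact ih (by omega)
      _ = Nat.centralBinom N * exp (-((m + 1 : ℕ) : ℝ) ^ 2 / (2 * N)) := by
          rw [mul_assoc, ← exp_add]; push_cast; rw [hexp]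

theorem choose_two_mul_toNat_add_eq {N : ℕ} {k : ℤ} (hk : |k| ≤ N) :
    (2 * N).choose ((N : ℤ) + k).toNat = (2 * N).choose (N + k.natAbs) := by
  obtain ⟨hlo, hhi⟩ := abs_le.1 hk
  rcases le_or_gt 0 k with hk0 | hk0
  · congr 1; omega
  · rw [← Nat.choose_symm (by omega)]
    congr 1; omega

/-- For every integer `N ≥ 1` and every integer `k` with `|k| ≤ N`,
`4^{−N} · C(2N, N+k) ≤ N^{−1/2} · exp(−k²/(2N))`. -/
theorem binomial_gaussian_bound (N : ℕ) (hN : 1 ≤ N) (k : ℤ) (hk : |k| ≤ (N : ℤ)) :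
    ((4 : ℝ) ^ N)⁻¹ * ((2 * N).choose ((N : ℤ) + k).toNat : ℝ)
      ≤ (N : ℝ) ^ (-(1 / 2 : ℝ)) * Real.exp (-(k : ℝ) ^ 2 / (2 * N)) := by
  have hsq : (k : ℝ) ^ 2 = ((k.natAbs : ℕ) : ℝ) ^ 2 := by
    rw [Nat.cast_natAbs, Int.cast_abs, sq_abs]
  rw [choose_two_mul_toNat_add_eq hk, hsq]
  set j := k.natAbs
  have hj : j ≤ N := by have := abs_le.1 hk; omega
  calc ((4 : ℝ) ^ N)⁻¹ * ((2 * N).choose (N + j) : ℝ)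
      ≤ ((4 : ℝ) ^ N)⁻¹ * (Nat.centralBinom N * exp (-(j : ℝ) ^ 2 / (2 * N))) := by
        gcongr; exact choose_two_mul_add_le hj
    _ = ((4 : ℝ) ^ N)⁻¹ * Nat.centralBinom N * exp (-(j : ℝ) ^ 2 / (2 * N)) := by ring
    _ ≤ (N : ℝ) ^ (-(1 / 2 : ℝ)) * exp (-(j : ℝ) ^ 2 / (2 * N)) := by
        gcongr; exact Nat.inv_four_pow_mul_centralBinom_le (by omega)
end

section
/- For every real c ≥ 0 and every natural number p, lim_{N→∞} N^{p} · e^{c√N} · 4^{−N} · ∑_{k=⌈N^{5/6} − c√N⌉}^{N} C(2N, N+k) = 0. -/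
/-!
The ratio `C(2N, N+m+1) / C(2N, N+m) = (N-m)/(N+m+1)` is at most `exp (-(2m+1)/(2N))`, which
telescopes to the Gaussian bound `C(2N, N+m) ≤ 4^N exp (-m²/(2N))`. Hence the tail sum starting
at `a = N^{5/6} - c√N` is at most `(N+1) 4^N exp (-a²/(2N))`. In the variable `t = N^{1/6}` all
exponents become integers, and the whole expression is at most
`2 exp (6(p+1) log t + c t³ + c t² - t⁴/2)`, where the quartic term wins.
-/

open Filter Asymptotics Real

lemma sub_div_add_add_one_le_exp {x y : ℝ} (hy : 0 ≤ y) (hyx : y + 1 ≤ x) :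
    (x - y) / (x + y + 1) ≤ exp (-(2 * y + 1) / (2 * x)) := by
  have hpos : 0 < x + y + 1 := by linarith
  calc (x - y) / (x + y + 1) = -((2 * y + 1) / (x + y + 1)) + 1 := by field_simp; ring
    _ ≤ exp (-((2 * y + 1) / (x + y + 1))) := add_one_le_exp _
    _ ≤ exp (-(2 * y + 1) / (2 * x)) := by
      rw [neg_div, exp_le_exp, neg_le_neg_iff]
      exact div_le_div_of_nonneg_left (by linarith) hpos (by linarith)

lemma cast_choose_two_mul_add_succ (N m : ℕ) (hm : m ≤ N) :
    ((2 * N).choose (N + (m + 1)) : ℝ) =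
      (2 * N).choose (N + m) * ((N - m) / (N + m + 1)) := by
  have h := Nat.choose_succ_right_eq (2 * N) (N + m)
  rw [show 2 * N - (N + m) = N - m by omega] at h
  rw [mul_div_assoc', eq_div_iff (by positivity)]
  exact_mod_cast h

lemma choose_two_mul_add_le_central_mul_exp (N m : ℕ) (hm : m ≤ N) :
    ((2 * N).choose (N + m) : ℝ) ≤ (2 * N).choose N * exp (-(m : ℝ) ^ 2 / (2 * N)) := by
  induction m with
  | zero => simp
  | succ m ih =>
    have hmN : (m : ℝ) + 1 ≤ N := by exact_mod_cast hm
    calc ((2 * N).choose (N + (m + 1)) : ℝ)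
        = (2 * N).choose (N + m) * ((N - m) / (N + m + 1)) :=
          cast_choose_two_mul_add_succ N m (by omega)
      _ ≤ ((2 * N).choose N * exp (-(m : ℝ) ^ 2 / (2 * N))) * exp (-(2 * m + 1) / (2 * N)) :=
          mul_le_mul (ih (by omega)) (sub_div_add_add_one_le_exp (by positivity) hmN)
            (div_nonneg (by linarith) (by positivity)) (by positivity)
      _ = (2 * N).choose N * exp (-((m + 1 : ℕ) : ℝ) ^ 2 / (2 * N)) := by
          rw [mul_assoc, ← exp_add]
          push_cast
          ring_nf

lemma sum_choose_two_mul_add_Icc_ceil_le (N : ℕ) {a : ℝ} (ha : 0 ≤ a) :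
    ∑ k ∈ Finset.Icc ⌈a⌉ (N : ℤ), ((2 * N).choose ((N : ℤ) + k).toNat : ℝ) ≤
      (N + 1) * (4 ^ N * exp (-a ^ 2 / (2 * N))) := by
  have hterm : ∀ k ∈ Finset.Icc ⌈a⌉ (N : ℤ),
      ((2 * N).choose ((N : ℤ) + k).toNat : ℝ) ≤ 4 ^ N * exp (-a ^ 2 / (2 * N)) := by
    intro k hk
    obtain ⟨hak, hkN⟩ := Finset.mem_Icc.mp hk
    lift k to ℕ using (Int.ceil_nonneg ha).trans hak
    have hak' : a ≤ k := by exact_mod_cast Int.ceil_le.mp hak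
    rw [show ((N : ℤ) + k).toNat = N + k by omega]
    calc ((2 * N).choose (N + k) : ℝ) ≤ (2 * N).choose N * exp (-(k : ℝ) ^ 2 / (2 * N)) :=
          choose_two_mul_add_le_central_mul_exp N k (by omega)
      _ ≤ 4 ^ N * exp (-a ^ 2 / (2 * N)) := by
          gcongr
          calc ((2 * N).choose N : ℝ) ≤ 2 ^ (2 * N) := by exact_mod_cast Nat.choose_le_two_pow _ _
            _ = 4 ^ N := by rw [pow_mul]; norm_num
  have hcard : ((Finset.Icc ⌈a⌉ (N : ℤ)).card : ℝ) ≤ N + 1 := by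
    have : (Finset.Icc ⌈a⌉ (N : ℤ)).card ≤ N + 1 := by
      rw [Int.card_Icc]
      have := Int.ceil_nonneg ha
      omega
    exact_mod_cast this
  calc _ ≤ (Finset.Icc ⌈a⌉ (N : ℤ)).card • (4 ^ N * exp (-a ^ 2 / (2 * N))) :=
        Finset.sum_le_card_nsmul _ _ _ hterm
    _ ≤ _ := by rw [nsmul_eq_mul]; gcongr

lemma tendsto_log_add_pow_sub_pow_atBot (q c : ℝ) :
    Tendsto (fun t : ℝ => q * log t + c * t ^ 3 + c * t ^ 2 - t ^ 4 / 2) atTop atBot := by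
  have hpow {n : ℕ} (hn : n < 4) : (fun t : ℝ => t ^ n) =o[atTop] fun t => t ^ 4 :=
    isLittleO_pow_pow_atTop_of_lt hn
  have hlog : log =o[atTop] fun t : ℝ => t ^ 4 :=
    isLittleO_log_id_atTop.trans
      (by simpa using hpow (n := 1) (by norm_num) : (fun t : ℝ => t) =o[atTop] _)
  have hsmall : (fun t : ℝ => q * log t + c * t ^ 3 + c * t ^ 2) =o[atTop] fun t => t ^ 4 / 2 :=
    (((hlog.const_mul_left q).add ((hpow (by norm_num)).const_mul_left c)).add
      ((hpow (by norm_num)).const_mul_left c)).const_mul_right (by norm_num : (1 / 2 : ℝ) ≠ 0)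
      |>.congr_right fun t => by ring
  have hquartic : Tendsto (fun t : ℝ => t ^ 4 / 2) atTop atTop :=
    (tendsto_pow_atTop (by norm_num)).atTop_div_const (by norm_num)
  have := (IsEquivalent.refl.sub_isLittleO hsmall).symm.tendsto_atTop hquartic
  exact (tendsto_neg_atTop_atBot.comp this).congr fun t => by simp

lemma binomial_tail_error_le_exp (c : ℝ) (p N : ℕ) {t : ℝ} (htN : t ^ 6 = N) (ht : 1 ≤ t)
    (hct : c ≤ t) :
    (N : ℝ) ^ p * exp (c * t ^ 3) * ((4 : ℝ) ^ N)⁻¹ *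
        ∑ k ∈ Finset.Icc ⌈t ^ 5 - c * t ^ 3⌉ (N : ℤ), ((2 * N).choose ((N : ℤ) + k).toNat : ℝ) ≤
      2 * exp ((6 * (p + 1)) * log t + c * t ^ 3 + c * t ^ 2 - t ^ 4 / 2) := by
  have ht0 : 0 < t := by linarith
  have ha : 0 ≤ t ^ 5 - c * t ^ 3 := by
    rw [show t ^ 5 - c * t ^ 3 = t ^ 3 * (t ^ 2 - c) by ring]
    exact mul_nonneg (by positivity) (by nlinarith)
  have hpoly : (N : ℝ) ^ p * (N + 1) ≤ 2 * exp ((6 * (p + 1)) * log t) := by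
    have hN : (1 : ℝ) ≤ N := htN ▸ one_le_pow₀ ht
    calc (N : ℝ) ^ p * (N + 1) ≤ 2 * (t ^ 6) ^ (p + 1) := by
          rw [htN, pow_succ]
          nlinarith [pow_pos (by linarith : (0 : ℝ) < N) p]
      _ = 2 * exp ((6 * (p + 1)) * log t) := by
          rw [← pow_mul, ← exp_log (pow_pos ht0 _), log_pow]
          push_cast
          ring_nf
  have hexp : c * t ^ 3 - (t ^ 5 - c * t ^ 3) ^ 2 / (2 * N) ≤
      c * t ^ 3 + c * t ^ 2 - t ^ 4 / 2 := by
    have : c * t ^ 3 - (t ^ 5 - c * t ^ 3) ^ 2 / (2 * t ^ 6) =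
        c * t ^ 3 + c * t ^ 2 - t ^ 4 / 2 - c ^ 2 / 2 := by
      field_simp
      ring
    rw [← htN, this]
    nlinarith [sq_nonneg c]
  calc _ ≤ (N : ℝ) ^ p * exp (c * t ^ 3) * ((4 : ℝ) ^ N)⁻¹ *
        ((N + 1) * (4 ^ N * exp (-(t ^ 5 - c * t ^ 3) ^ 2 / (2 * N)))) := by
        gcongr
        exact sum_choose_two_mul_add_Icc_ceil_le N ha
    _ = (N : ℝ) ^ p * (N + 1) * exp (c * t ^ 3 - (t ^ 5 - c * t ^ 3) ^ 2 / (2 * N)) := by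
        rw [exp_sub, neg_div, exp_neg]
        field_simp
    _ ≤ 2 * exp ((6 * (p + 1)) * log t) * exp (c * t ^ 3 + c * t ^ 2 - t ^ 4 / 2) := by
        gcongr
    _ = _ := by rw [mul_assoc, ← exp_add]; ring_nf

theorem binomial_tail_error_decay_general (c : ℝ) (p : ℕ) :
    Tendsto
      (fun N : ℕ =>
        (N : ℝ) ^ p * Real.exp (c * Real.sqrt N) * ((4 : ℝ) ^ N)⁻¹ *
          ∑ k ∈ Finset.Icc ⌈(N : ℝ) ^ ((5 : ℝ) / 6) - c * Real.sqrt N⌉ (N : ℤ),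
            ((2 * N).choose ((N : ℤ) + k).toNat : ℝ))
      atTop (nhds 0) := by
  have hroot : Tendsto (fun N : ℕ => (N : ℝ) ^ ((1 : ℝ) / 6)) atTop atTop :=
    (tendsto_rpow_atTop (by norm_num)).comp tendsto_natCast_atTop_atTop
  have hbound := (tendsto_exp_atBot.comp
    ((tendsto_log_add_pow_sub_pow_atBot (6 * (p + 1)) c).comp hroot)).const_mul 2
  rw [mul_zero] at hbound
  refine tendsto_of_tendsto_of_tendsto_of_le_of_le' tendsto_const_nhds hbound
    (.of_forall fun N => by positivity) ?_
  filter_upwards [hroot.eventually_ge_atTop (max 1 c)] with N hN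
  have hpow (n : ℕ) : ((N : ℝ) ^ ((1 : ℝ) / 6)) ^ n = (N : ℝ) ^ ((n : ℝ) / 6) := by
    rw [← rpow_mul_natCast N.cast_nonneg]
    ring_nf
  rw [sqrt_eq_rpow, show (1 : ℝ) / 2 = (3 : ℕ) / 6 by norm_num, ← hpow,
    show (5 : ℝ) / 6 = (5 : ℕ) / 6 by norm_num, ← hpow]
  exact binomial_tail_error_le_exp c p N (by rw [hpow]; norm_num) (le_of_max_le_left hN)
    (le_of_max_le_right hN)

/-- For every real `c ≥ 0` and every natural number `p`,
`N^p · e^{c√N} · 4^{−N} · ∑_{k=⌈N^{5/6} − c√N⌉}^{N} C(2N, N+k) → 0` as `N → ∞`. -/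
theorem binomial_tail_error_decay (c : ℝ) (hc : 0 ≤ c) (p : ℕ) :
    Tendsto
      (fun N : ℕ =>
        (N : ℝ) ^ p * Real.exp (c * Real.sqrt N) * ((4 : ℝ) ^ N)⁻¹ *
          ∑ k ∈ Finset.Icc ⌈(N : ℝ) ^ ((5 : ℝ) / 6) - c * Real.sqrt N⌉ (N : ℤ),
            ((2 * N).choose ((N : ℤ) + k).toNat : ℝ))
      atTop (nhds 0) :=
  binomial_tail_error_decay_general c p
end

section
/- Let L > 0 and let u, v be real numbers with u + v > 0. Let (B_t)_{t∈[0,L]} be a standard one-dimensional Brownian motion started at 0. Then the partition function 𝒵_{u,v} := ∫_{−∞}^{∞} E[ exp( −2(u+v)x − 2v·B_L − e^{−2x} ∫₀^L e^{−2B_t} dt ) ] dx is finite. -/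
open MeasureTheory ProbabilityTheory

/-- `B` is a standard one-dimensional Brownian motion started at `0` (on nonnegative times):
it starts at `0`, has continuous paths, its increments over `[s,t]` (for `0 ≤ s ≤ t`) are
centered Gaussian with variance `t − s`, and its increments over disjoint consecutive
intervals are independent. -/
def IsStdBrownianMotion {Ω : Type*} [MeasureSpace Ω] (B : ℝ → Ω → ℝ) : Prop :=
  (∀ ω, B 0 ω = 0) ∧ (∀ ω, Continuous fun t => B t ω) ∧
  (∀ s t : ℝ, 0 ≤ s → s ≤ t →
    Measure.map (fun ω => B t ω - B s ω) (volume : Measure Ω)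
      = gaussianReal 0 (t - s).toNNReal) ∧
  (∀ (n : ℕ) (ts : ℕ → ℝ), Monotone ts → (∀ i, 0 ≤ ts i) →
    iIndepFun (m := fun _ : Fin n => Real.measurableSpace)
      (fun i ω => B (ts (i + 1)) ω - B (ts i) ω) (volume : Measure Ω))

/-! Integrate out `x` first. For `c > 0` and an integer `k > s = u + v`, using
`e^{-z} ≤ k! z^{-k}` with `z = e^{-2x} c` on `x ≤ 0` gives
`∫ exp(-2s x - e^{-2x} c) dx ≤ (2s)⁻¹ + k! c^{-k} / (2k - 2s)`.
For `c = ∫₀^L e^{-2B}`, Jensen's inequality for `exp`, applied twice, gives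
`c^{-k} ≤ L^{-k-1} ∫₀^L e^{2k B_t} dt`, and `e^{-2v B_L} e^{2k B_t} ≤ e^{-4v B_L} + e^{4k B_t}`
reduces the expectation to Gaussian exponential moments. Tonelli needs a jointly measurable
version of `B`, which exists because its paths are continuous. -/

open Real Set Filter TopologicalSpace
open scoped ENNReal NNReal Nat

lemma exp_neg_le_factorial_mul_inv_pow {z : ℝ} (hz : 0 < z) (k : ℕ) :
    exp (-z) ≤ k ! * (z⁻¹) ^ k := by
  have h := pow_div_factorial_le_exp (x := z) hz.le k
  rw [div_le_iff₀ (by positivity)] at h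
  rw [exp_neg, inv_pow, ← div_eq_mul_inv, le_div_iff₀ (by positivity),
    inv_mul_le_iff₀ (exp_pos z)]
  linarith

lemma exp_add_le_exp_two_mul_add_exp_two_mul (x y : ℝ) :
    exp (x + y) ≤ exp (2 * x) + exp (2 * y) := by
  rcases le_total x y with h | h
  · exact (exp_le_exp.2 (by linarith)).trans (le_add_of_nonneg_left (exp_pos _).le)
  · exact (exp_le_exp.2 (by linarith)).trans (le_add_of_nonneg_right (exp_pos _).le)

lemma inv_integral_exp_pow_le {α : Type*} [MeasurableSpace α] {μ : Measure α}
    [IsFiniteMeasure μ] [NeZero μ] {f : α → ℝ} (k : ℕ) (hf : Integrable f μ)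
    (hexp : Integrable (fun x => exp (f x)) μ)
    (hexpk : Integrable (fun x => exp (-k * f x)) μ) :
    ((∫ x, exp (f x) ∂μ)⁻¹) ^ k ≤ ((μ.real univ) ^ (k + 1))⁻¹ * ∫ x, exp (-k * f x) ∂μ := by
  set M := μ.real univ
  have hM : 0 < M := by
    simp only [M, measureReal_def]
    exact ENNReal.toReal_pos (NeZero.ne _) (measure_ne_top _ _)
  have jensen_f : exp (⨍ x, f x ∂μ) ≤ ⨍ x, exp (f x) ∂μ :=
    convexOn_exp.map_average_le continuousOn_exp isClosed_univ (ae_of_all _ fun _ => trivial)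
      hf hexp
  have jensen_kf : exp (⨍ x, -k * f x ∂μ) ≤ ⨍ x, exp (-k * f x) ∂μ :=
    convexOn_exp.map_average_le continuousOn_exp isClosed_univ (ae_of_all _ fun _ => trivial)
      (hf.const_mul _) hexpk
  simp only [average_eq, smul_eq_mul, integral_const_mul] at jensen_f jensen_kf
  set m := M⁻¹ * ∫ x, f x ∂μ
  set A := ∫ x, exp (f x) ∂μ
  have hA : 0 < A := integral_exp_pos hexp
  have hMA : M / A ≤ exp (-m) := by
    rw [exp_neg, div_le_iff₀ hA]
    calc M = (exp m)⁻¹ * exp m * M := by rw [inv_mul_cancel₀ (exp_pos m).ne', one_mul]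
      _ ≤ (exp m)⁻¹ * (M⁻¹ * A) * M := by gcongr
      _ = (exp m)⁻¹ * A := by field_simp
  calc (A⁻¹) ^ k = (M / A) ^ k * (M ^ k)⁻¹ := by rw [div_pow, inv_pow]; field_simp
    _ ≤ exp (-m) ^ k * (M ^ k)⁻¹ := by gcongr
    _ = exp (M⁻¹ * (-k * ∫ x, f x ∂μ)) * (M ^ k)⁻¹ := by
        rw [← exp_nat_mul]; congr 2; ring
    _ ≤ M⁻¹ * (∫ x, exp (-k * f x) ∂μ) * (M ^ k)⁻¹ := by gcongr
    _ = (M ^ (k + 1))⁻¹ * ∫ x, exp (-k * f x) ∂μ := by rw [pow_succ]; field_simp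

lemma inv_intervalIntegral_exp_pow_le {h : ℝ → ℝ} (hh : Continuous h) {L : ℝ}
    (hL : 0 < L) (k : ℕ) :
    ((∫ t in (0)..L, exp (-2 * h t))⁻¹) ^ k
      ≤ (L ^ (k + 1))⁻¹ * ∫ t in Ioc 0 L, exp (2 * k * h t) := by
  have : NeZero (volume.restrict (Ioc 0 L)) := ⟨by simp [hL]⟩
  have h := inv_integral_exp_pow_le (μ := volume.restrict (Ioc 0 L)) (f := fun t => -2 * h t) k
    (by fun_prop : Continuous _).integrableOn_Ioc (by fun_prop : Continuous _).integrableOn_Ioc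
    (by fun_prop : Continuous _).integrableOn_Ioc
  simpa [intervalIntegral.integral_of_le hL.le, hL.le, mul_comm, mul_left_comm] using h

lemma lintegral_exp_neg_mul_sub_exp_mul_le {a c : ℝ} (ha : 0 < a) {k : ℕ} (hk : a < 2 * k)
    (hc : 0 < c) :
    ∫⁻ x, ENNReal.ofReal (exp (-a * x - exp (-2 * x) * c))
      ≤ ENNReal.ofReal (a⁻¹ + k ! * (c⁻¹) ^ k / (2 * k - a)) := by
  have hb : 0 < 2 * k - a := by linarith
  have right_tail : ∀ x, exp (-a * x - exp (-2 * x) * c) ≤ exp (-a * x) := fun x =>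
    exp_le_exp.2 (by nlinarith [exp_pos (-2 * x)])
  have left_tail : ∀ x, exp (-a * x - exp (-2 * x) * c)
      ≤ k ! * (c⁻¹) ^ k * exp ((2 * k - a) * x) := fun x => by
    have hexp : exp ((2 * k - a) * x) = exp (-a * x) * (exp (-2 * x))⁻¹ ^ k := by
      rw [← exp_neg, ← exp_nat_mul, ← exp_add]; ring_nf
    calc exp (-a * x - exp (-2 * x) * c) = exp (-a * x) * exp (-(exp (-2 * x) * c)) := by
          rw [← exp_add]; ring_nf
      _ ≤ exp (-a * x) * (k ! * ((exp (-2 * x) * c)⁻¹) ^ k) := by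
          gcongr; exact exp_neg_le_factorial_mul_inv_pow (by positivity) k
      _ = k ! * (c⁻¹) ^ k * exp ((2 * k - a) * x) := by rw [hexp, mul_inv, mul_pow]; ring
  rw [← lintegral_add_compl _ measurableSet_Iic, compl_Iic, add_comm,
    ENNReal.ofReal_add (by positivity) (by positivity)]
  gcongr
  · calc ∫⁻ x in Ioi 0, ENNReal.ofReal (exp (-a * x - exp (-2 * x) * c))
        ≤ ∫⁻ x in Ioi 0, ENNReal.ofReal (exp (-a * x)) :=
          lintegral_mono fun x => ENNReal.ofReal_le_ofReal (right_tail x)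
      _ = ENNReal.ofReal a⁻¹ := by
          rw [← ofReal_integral_eq_lintegral_ofReal (integrableOn_exp_mul_Ioi (by linarith) 0)
            (ae_of_all _ fun _ => (exp_pos _).le), integral_exp_mul_Ioi (by linarith)]
          simp
  · calc ∫⁻ x in Iic 0, ENNReal.ofReal (exp (-a * x - exp (-2 * x) * c))
        ≤ ∫⁻ x in Iic 0, ENNReal.ofReal (k ! * (c⁻¹) ^ k * exp ((2 * k - a) * x)) :=
          lintegral_mono fun x => ENNReal.ofReal_le_ofReal (left_tail x)
      _ = ENNReal.ofReal (k ! * (c⁻¹) ^ k / (2 * k - a)) := by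
          rw [← ofReal_integral_eq_lintegral_ofReal
            ((integrableOn_exp_mul_Iic hb 0).const_mul _)
            (ae_of_all _ fun _ => by positivity), integral_const_mul, integral_exp_mul_Iic hb,
            mul_zero, exp_zero, mul_one_div]

lemma lintegral_exp_sub_exp_mul_intervalIntegral_le {h : ℝ → ℝ} (hh : Continuous h)
    {L s : ℝ} (hL : 0 < L) (hs : 0 < s) {k : ℕ} (hk : s < k) (b : ℝ) :
    ∫⁻ x, ENNReal.ofReal
        (exp (-2 * s * x - b * h L - exp (-2 * x) * ∫ t in (0)..L, exp (-2 * h t)))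
      ≤ ENNReal.ofReal (2 * s)⁻¹ * ENNReal.ofReal (exp (-b * h L))
        + ENNReal.ofReal (k ! / (2 * k - 2 * s) / L ^ (k + 1))
          * ∫⁻ t in Ioc 0 L, ENNReal.ofReal (exp (-b * h L + 2 * k * h t)) := by
  set β := b * h L
  set I := ∫ t in (0)..L, exp (-2 * h t)
  have hI : 0 < I := intervalIntegral.intervalIntegral_pos_of_pos
    ((by fun_prop : Continuous fun t => exp (-2 * h t)).intervalIntegrable _ _)
    (fun _ => exp_pos _) hL
  have hb : 0 < 2 * k - 2 * s := by linarith
  calc ∫⁻ x, ENNReal.ofReal (exp (-2 * s * x - β - exp (-2 * x) * I))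
      = ENNReal.ofReal (exp (-β))
          * ∫⁻ x, ENNReal.ofReal (exp (-(2 * s) * x - exp (-2 * x) * I)) := by
        rw [← lintegral_const_mul' _ _ ENNReal.ofReal_ne_top]
        congr 1; funext x
        rw [← ENNReal.ofReal_mul (exp_pos _).le, ← exp_add]; ring_nf
    _ ≤ ENNReal.ofReal (exp (-β))
          * ENNReal.ofReal ((2 * s)⁻¹ + k ! * (I⁻¹) ^ k / (2 * k - 2 * s)) := by
        gcongr
        exact lintegral_exp_neg_mul_sub_exp_mul_le (by positivity) (by linarith) hI
    _ ≤ ENNReal.ofReal (exp (-β)) * ENNReal.ofReal ((2 * s)⁻¹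
          + k ! * ((L ^ (k + 1))⁻¹ * ∫ t in Ioc 0 L, exp (2 * k * h t)) / (2 * k - 2 * s)) := by
        gcongr
        exact inv_intervalIntegral_exp_pow_le hh hL k
    _ = ENNReal.ofReal (2 * s)⁻¹ * ENNReal.ofReal (exp (-β))
          + ENNReal.ofReal (k ! / (2 * k - 2 * s) / L ^ (k + 1))
            * ENNReal.ofReal (∫ t in Ioc 0 L, exp (-β + 2 * k * h t)) := by
        simp_rw [exp_add, integral_const_mul]
        rw [← ENNReal.ofReal_mul (exp_pos _).le, ← ENNReal.ofReal_mul (by positivity),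
          ← ENNReal.ofReal_mul (by positivity),
          ← ENNReal.ofReal_add (by positivity) (by positivity)]
        congr 1
        ring
    _ = _ := by
        rw [neg_mul, ofReal_integral_eq_lintegral_ofReal
          (by fun_prop : Continuous _).integrableOn_Ioc (ae_of_all _ fun _ => (exp_pos _).le)]

lemma lintegral_exp_mul_of_map_eq_gaussianReal {Ω : Type*} [MeasurableSpace Ω]
    {μ : Measure Ω} {X : Ω → ℝ} {v : ℝ≥0} (hX : μ.map X = gaussianReal 0 v) (c : ℝ) :
    ∫⁻ ω, ENNReal.ofReal (exp (c * X ω)) ∂μ = ENNReal.ofReal (exp (v * c ^ 2 / 2)) := by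
  have hXm : AEMeasurable X μ := aemeasurable_of_map_neZero (by rw [hX]; infer_instance)
  have hmgf := congrFun (mgf_id_gaussianReal (μ := 0) (v := v)) c
  simp only [mgf, id, zero_mul, zero_add] at hmgf
  rw [← lintegral_map' (f := fun y => ENNReal.ofReal (exp (c * y))) (by fun_prop) hXm, hX,
    ← ofReal_integral_eq_lintegral_ofReal (integrable_exp_mul_gaussianReal c)
      (ae_of_all _ fun _ => (exp_pos _).le), hmgf]

lemma lintegral_setLIntegral_exp_mul_add_mul_lt_top {Ω : Type*} [MeasurableSpace Ω]
    {μ : Measure Ω} [SFinite μ] {Y : ℝ → Ω → ℝ} (hY : Measurable (Function.uncurry Y))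
    (hlaw : ∀ t, 0 ≤ t → μ.map (Y t) = gaussianReal 0 t.toNNReal) {L : ℝ} (hL : 0 ≤ L)
    (α β : ℝ) :
    ∫⁻ ω, (∫⁻ t in Ioc 0 L, ENNReal.ofReal (exp (α * Y L ω + β * Y t ω))) ∂μ < ⊤ := by
  have hmoment : ∀ t ∈ Ioc 0 L, ∫⁻ ω, ENNReal.ofReal (exp (α * Y L ω + β * Y t ω)) ∂μ
      ≤ ENNReal.ofReal (exp (L * (2 * α) ^ 2 / 2))
        + ENNReal.ofReal (exp (L * (2 * β) ^ 2 / 2)) := by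
    intro t ht
    calc ∫⁻ ω, ENNReal.ofReal (exp (α * Y L ω + β * Y t ω)) ∂μ
        ≤ ∫⁻ ω, (ENNReal.ofReal (exp (2 * α * Y L ω))
            + ENNReal.ofReal (exp (2 * β * Y t ω))) ∂μ := by
          refine lintegral_mono fun ω => ?_
          rw [← ENNReal.ofReal_add (exp_pos _).le (exp_pos _).le]
          refine ENNReal.ofReal_le_ofReal ?_
          simpa only [mul_assoc] using
            exp_add_le_exp_two_mul_add_exp_two_mul (α * Y L ω) (β * Y t ω)
      _ ≤ _ := by
          rw [lintegral_add_left (by fun_prop),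
            lintegral_exp_mul_of_map_eq_gaussianReal (hlaw L hL),
            lintegral_exp_mul_of_map_eq_gaussianReal (hlaw t ht.1.le), Real.coe_toNNReal _ hL,
            Real.coe_toNNReal _ ht.1.le]
          gcongr
          exact ht.2
  rw [lintegral_lintegral_swap (by fun_prop)]
  calc ∫⁻ t in Ioc 0 L, ∫⁻ ω, ENNReal.ofReal (exp (α * Y L ω + β * Y t ω)) ∂μ
      ≤ ∫⁻ t in Ioc 0 L, (ENNReal.ofReal (exp (L * (2 * α) ^ 2 / 2))
          + ENNReal.ofReal (exp (L * (2 * β) ^ 2 / 2))) :=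
        setLIntegral_mono measurable_const hmoment
    _ < ⊤ := by simp [ENNReal.mul_lt_top]

theorem exists_measurable_modification_of_continuous {ι Ω E : Type*} [TopologicalSpace ι]
    [MetrizableSpace ι] [SecondCountableTopology ι] [MeasurableSpace ι]
    [OpensMeasurableSpace ι] [MeasurableSpace Ω] {μ : Measure Ω} [TopologicalSpace E]
    [PseudoMetrizableSpace E] [MeasurableSpace E] [BorelSpace E] [Nonempty E]
    {X : ι → Ω → E} (hcont : ∀ ω, Continuous fun i => X i ω) (hX : ∀ i, AEMeasurable (X i) μ) :
    ∃ Y : ι → Ω → E, Measurable (Function.uncurry Y) ∧ (∀ ω, Continuous fun i => Y i ω) ∧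
      ∀ᵐ ω ∂μ, ∀ i, Y i ω = X i ω := by
  classical
  obtain ⟨D, hD, hDdense⟩ := TopologicalSpace.exists_countable_dense ι
  have := hD.to_subtype
  -- off the null set `N`, `X` agrees on the countable dense set `D` with measurable versions,
  -- hence by continuity it is a pointwise limit of measurable functions
  set N := toMeasurable μ {ω | ¬ ∀ d : D, X d ω = (hX d).mk _ ω}
  have hN_null : μ N = 0 := by
    rw [measure_toMeasurable, ← ae_iff]
    exact ae_all_iff.2 fun d => (hX d).ae_eq_mk
  have hN_good : ∀ ω ∉ N, ∀ d : D, X d ω = (hX d).mk _ ω := fun ω hω =>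
    by_contra fun h => hω (subset_toMeasurable _ _ h)
  set e : E := Classical.arbitrary E
  set Y : ι → Ω → E := fun i ω => if ω ∈ N then e else X i ω
  have hY_cont : ∀ ω, Continuous fun i => Y i ω := fun ω => by
    by_cases hω : ω ∈ N
    · simp only [Y, hω, if_true, continuous_const]
    · simpa only [Y, hω, if_false] using hcont ω
  have hY_meas : ∀ i, Measurable (Y i) := fun i => by
    obtain ⟨d, hdD, hdi⟩ := mem_closure_iff_seq_limit.1 (hDdense.closure_eq ▸ mem_univ i)
    refine measurable_of_tendsto_metrizable
      (f := fun n ω => if ω ∈ N then e else (hX (d n)).mk _ ω)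
      (fun n => Measurable.ite (measurableSet_toMeasurable _ _) measurable_const
        (hX _).measurable_mk) (tendsto_pi_nhds.2 fun ω => ?_)
    by_cases hω : ω ∈ N
    · simp only [Y, hω, if_true, tendsto_const_nhds]
    · simp only [Y, hω, if_false, ← hN_good ω hω ⟨_, hdD _⟩]
      exact ((hcont ω).tendsto i).comp hdi
  refine ⟨Y, measurable_uncurry_of_continuous_of_measurable hY_cont hY_meas, hY_cont, ?_⟩
  filter_upwards [measure_eq_zero_iff_ae_notMem.1 hN_null] with ω hω i
  simp only [Y, hω, if_false]

lemma measurable_intervalIntegral_of_measurable_uncurry {Ω : Type*} [MeasurableSpace Ω]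
    {Y : ℝ → Ω → ℝ} (hY : Measurable (Function.uncurry Y)) (a b : ℝ) :
    Measurable fun ω => ∫ t in a..b, Y t ω := by
  have hswap : StronglyMeasurable (Function.uncurry fun ω t => Y t ω) :=
    (hY.comp measurable_swap).stronglyMeasurable
  exact (hswap.integral_prod_right.measurable).sub hswap.integral_prod_right.measurable

namespace IsStdBrownianMotion

variable {Ω : Type*} [MeasureSpace Ω] {B : ℝ → Ω → ℝ}

lemma map_eq_gaussianReal (hB : IsStdBrownianMotion B) {t : ℝ} (ht : 0 ≤ t) :
    (volume : Measure Ω).map (B t) = gaussianReal 0 t.toNNReal := by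
  simpa [hB.1] using hB.2.2.1 0 t le_rfl ht

lemma exists_measurable_modification (hB : IsStdBrownianMotion B) :
    ∃ Y : ℝ → Ω → ℝ, Measurable (Function.uncurry Y) ∧ (∀ ω, Continuous fun t => Y t ω) ∧
      (∀ᵐ ω, ∀ t, 0 ≤ t → Y t ω = B t ω) ∧
      ∀ t, 0 ≤ t → (volume : Measure Ω).map (Y t) = gaussianReal 0 t.toNNReal := by
  -- the definition only controls `B t` for `t ≥ 0`
  obtain ⟨Y, hYm, hYc, hYB⟩ := exists_measurable_modification_of_continuous
    (X := fun t => B (max t 0)) (fun ω => (hB.2.1 ω).comp (continuous_id.max continuous_const))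
    (fun t => aemeasurable_of_map_neZero
      (by rw [hB.map_eq_gaussianReal (le_max_right t 0)]; infer_instance))
  replace hYB : ∀ᵐ ω, ∀ t, 0 ≤ t → Y t ω = B t ω := by
    filter_upwards [hYB] with ω h t ht
    simpa [ht] using h t
  refine ⟨Y, hYm, hYc, hYB, fun t ht => ?_⟩
  rw [← hB.map_eq_gaussianReal ht]
  exact Measure.map_congr (by filter_upwards [hYB] with ω h using h t ht)

end IsStdBrownianMotion

/-- Finiteness of the open KPZ partition function: for `L > 0` and `u + v > 0`, with
`(B_t)` a standard Brownian motion started at `0`,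
`𝒵_{u,v} = ∫_ℝ E[exp(−2(u+v)x − 2v B_L − e^{−2x} ∫₀^L e^{−2B_t} dt)] dx < ∞`. -/
theorem openKPZ_partition_function_finite
    {Ω : Type*} [MeasureSpace Ω] [IsProbabilityMeasure (volume : Measure Ω)]
    (L u v : ℝ) (hL : 0 < L) (huv : 0 < u + v)
    (B : ℝ → Ω → ℝ) (hB : IsStdBrownianMotion B) :
    (∫⁻ x : ℝ, ∫⁻ ω : Ω, ENNReal.ofReal
        (Real.exp (-2 * (u + v) * x - 2 * v * B L ω
          - Real.exp (-2 * x) * ∫ t in (0:ℝ)..L, Real.exp (-2 * B t ω)))) < ⊤ := by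
  obtain ⟨Y, hYm, hYc, hYB, hYlaw⟩ := hB.exists_measurable_modification
  have hYL : Measurable (Y L) := hYm.comp measurable_prodMk_left
  have hI : Measurable fun ω => ∫ t in (0)..L, exp (-2 * Y t ω) :=
    measurable_intervalIntegral_of_measurable_uncurry (Y := fun t ω => exp (-2 * Y t ω))
      (by fun_prop) 0 L
  obtain ⟨k, hk⟩ := exists_nat_gt (u + v)
  calc _ = ∫⁻ x, ∫⁻ ω, ENNReal.ofReal (exp (-2 * (u + v) * x - 2 * v * Y L ω
          - exp (-2 * x) * ∫ t in (0)..L, exp (-2 * Y t ω))) := by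
        refine lintegral_congr fun x => lintegral_congr_ae ?_
        filter_upwards [hYB] with ω h
        rw [h L hL.le, intervalIntegral.integral_congr fun t ht => ?_]
        rw [h t (uIcc_of_le hL.le ▸ ht).1]
    _ = ∫⁻ ω, ∫⁻ x, ENNReal.ofReal (exp (-2 * (u + v) * x - 2 * v * Y L ω
          - exp (-2 * x) * ∫ t in (0)..L, exp (-2 * Y t ω))) :=
        lintegral_lintegral_swap (Measurable.aemeasurable
          (((measurable_fst.const_mul _).sub ((hYL.comp measurable_snd).const_mul _)).sub
            ((measurable_fst.const_mul _).exp.mul (hI.comp measurable_snd))).exp.ennreal_ofReal)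
    _ ≤ ∫⁻ ω, (ENNReal.ofReal (2 * (u + v))⁻¹ * ENNReal.ofReal (exp (-(2 * v) * Y L ω))
        + ENNReal.ofReal (k ! / (2 * k - 2 * (u + v)) / L ^ (k + 1))
          * ∫⁻ t in Ioc 0 L, ENNReal.ofReal (exp (-(2 * v) * Y L ω + 2 * k * Y t ω))) :=
        lintegral_mono fun ω => lintegral_exp_sub_exp_mul_intervalIntegral_le (hYc ω) hL huv hk _
    _ < ⊤ := by
        rw [lintegral_add_left (by fun_prop), lintegral_const_mul _ (by fun_prop),
          lintegral_const_mul' _ _ ENNReal.ofReal_ne_top,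
          lintegral_exp_mul_of_map_eq_gaussianReal (hYlaw L hL.le)]
        exact ENNReal.add_lt_top.2 ⟨by simp [ENNReal.mul_lt_top], ENNReal.mul_lt_top
          ENNReal.ofReal_lt_top (lintegral_setLIntegral_exp_mul_add_mul_lt_top hYm hYlaw hL.le _ _)⟩
end

section
/- Let L > 0, v, x ∈ ℝ and δ > 0. Let g, g̃ : [0,L] → ℝ be continuous with sup_{t∈[0,L]} |g(t) − g̃(t)| ≤ δ, and set I := ∫₀^L e^{−2g̃(t)} dt and Φ(f) := exp( −2v f(L) − e^{−2x} ∫₀^L e^{−2f(t)} dt ). Then |Φ(g) − Φ(g̃)| ≤ Φ(g̃) · max{ exp( 2|v|δ + e^{−2x}(1 − e^{−2δ}) I ) − 1, 1 − exp( −2|v|δ − e^{−2x}(e^{2δ} − 1) I ) }. -/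
/-!
Write `Φ(g) = Φ(g̃) · e^D` with `D` the difference of the two exponents. Since
`e^{-2δ} ≤ e^{-2g(t)} / e^{-2g̃(t)} ≤ e^{2δ}` pointwise, the integrals satisfy
`e^{-2δ} I ≤ ∫₀^L e^{-2g} ≤ e^{2δ} I`, which together with `|g(L) - g̃(L)| ≤ δ` confines `D`
to an interval `[lo, hi]`; then `|e^D - 1| ≤ max (e^hi - 1) (1 - e^lo)` by monotonicity of `exp`.
-/

open Real Set

theorem abs_exp_sub_exp_le_of_sub_mem_Icc {a b lo hi : ℝ} (h : a - b ∈ Icc lo hi) :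
    |exp a - exp b| ≤ exp b * max (exp hi - 1) (1 - exp lo) := by
  have hfactor : exp a - exp b = exp b * (exp (a - b) - 1) := by
    rw [mul_sub, ← exp_add]; ring_nf
  rw [hfactor, abs_mul, abs_of_pos (exp_pos b)]
  gcongr
  rcases le_total 1 (exp (a - b)) with h1 | h1
  · rw [abs_of_nonneg (by linarith)]
    exact le_max_of_le_left (by linarith [exp_le_exp.2 h.2])
  · rw [abs_of_nonpos (by linarith)]
    exact le_max_of_le_right (by linarith [exp_le_exp.2 h.1])

theorem integral_exp_le_exp_mul_integral_exp {f f' : ℝ → ℝ} {a b c : ℝ} (hab : a ≤ b)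
    (hf : ContinuousOn f (Icc a b)) (hf' : ContinuousOn f' (Icc a b))
    (h : ∀ t ∈ Icc a b, f t ≤ f' t + c) :
    ∫ t in a..b, exp (f t) ≤ exp c * ∫ t in a..b, exp (f' t) := by
  rw [← intervalIntegral.integral_const_mul]
  refine intervalIntegral.integral_mono_on hab
    ((continuous_exp.comp_continuousOn hf).intervalIntegrable_of_Icc hab)
    (((continuous_exp.comp_continuousOn hf').intervalIntegrable_of_Icc hab).const_mul _)
    fun t ht => ?_
  rw [← exp_add, add_comm c]
  exact exp_le_exp.2 (h t ht)

theorem sup_norm_perturbation_estimate_general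
    (L v x δ : ℝ) (hL : 0 < L)
    (g gt : ℝ → ℝ)
    (hg : ContinuousOn g (Set.Icc 0 L)) (hgt : ContinuousOn gt (Set.Icc 0 L))
    (hclose : ∀ t ∈ Set.Icc (0:ℝ) L, |g t - gt t| ≤ δ) :
    |Real.exp (-2 * v * g L - Real.exp (-2 * x) * ∫ t in (0:ℝ)..L, Real.exp (-2 * g t))
        - Real.exp (-2 * v * gt L - Real.exp (-2 * x) * ∫ t in (0:ℝ)..L, Real.exp (-2 * gt t))|
      ≤ Real.exp (-2 * v * gt L - Real.exp (-2 * x) * ∫ t in (0:ℝ)..L, Real.exp (-2 * gt t)) *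
          max
            (Real.exp (2 * |v| * δ + Real.exp (-2 * x) * (1 - Real.exp (-2 * δ)) *
                ∫ t in (0:ℝ)..L, Real.exp (-2 * gt t)) - 1)
            (1 - Real.exp (-2 * |v| * δ - Real.exp (-2 * x) * (Real.exp (2 * δ) - 1) *
                ∫ t in (0:ℝ)..L, Real.exp (-2 * gt t))) := by
  apply abs_exp_sub_exp_le_of_sub_mem_Icc
  set J := ∫ t in (0:ℝ)..L, exp (-2 * g t)
  set I := ∫ t in (0:ℝ)..L, exp (-2 * gt t)
  have hcont (f : ℝ → ℝ) (hf : ContinuousOn f (Icc 0 L)) :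
      ContinuousOn (fun t => -2 * f t) (Icc 0 L) :=
    continuousOn_const.mul hf
  have hJ_le : J ≤ exp (2 * δ) * I :=
    integral_exp_le_exp_mul_integral_exp hL.le (hcont g hg) (hcont gt hgt) fun t ht => by
      linarith [(abs_le.1 (hclose t ht)).1]
  have hI_le : I ≤ exp (2 * δ) * J :=
    integral_exp_le_exp_mul_integral_exp hL.le (hcont gt hgt) (hcont g hg) fun t ht => by
      linarith [(abs_le.1 (hclose t ht)).2]
  have hJ_ge : exp (-2 * δ) * I ≤ J := by
    rw [neg_mul, exp_neg, inv_mul_le_iff₀ (exp_pos _)]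
    exact hI_le
  have hvL : |-2 * v * g L - -2 * v * gt L| ≤ 2 * |v| * δ := by
    rw [← mul_sub, abs_mul, abs_mul, abs_neg, abs_two]
    exact mul_le_mul_of_nonneg_left (hclose L ⟨hL.le, le_rfl⟩) (by positivity)
  have hex := (exp_pos (-2 * x)).le
  constructor
  · linarith [(abs_le.1 hvL).1, mul_le_mul_of_nonneg_left hJ_le hex]
  · linarith [(abs_le.1 hvL).2, mul_le_mul_of_nonneg_left hJ_ge hex]

/-- Deterministic sup-norm perturbation estimate for the functional
`Φ(f) = exp(−2v f(L) − e^{−2x} ∫₀^L e^{−2f(t)} dt)`: if `g, g̃` are continuous on `[0,L]`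
and uniformly `δ`-close there, then with `I = ∫₀^L e^{−2g̃(t)} dt`,
`|Φ(g) − Φ(g̃)| ≤ Φ(g̃) max{exp(2|v|δ + e^{−2x}(1−e^{−2δ})I) − 1,
                             1 − exp(−2|v|δ − e^{−2x}(e^{2δ}−1)I)}`. -/
theorem sup_norm_perturbation_estimate
    (L v x δ : ℝ) (hL : 0 < L) (hδ : 0 < δ)
    (g gt : ℝ → ℝ)
    (hg : ContinuousOn g (Set.Icc 0 L)) (hgt : ContinuousOn gt (Set.Icc 0 L))
    (hclose : ∀ t ∈ Set.Icc (0:ℝ) L, |g t - gt t| ≤ δ) :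
    |Real.exp (-2 * v * g L - Real.exp (-2 * x) * ∫ t in (0:ℝ)..L, Real.exp (-2 * g t))
        - Real.exp (-2 * v * gt L - Real.exp (-2 * x) * ∫ t in (0:ℝ)..L, Real.exp (-2 * gt t))|
      ≤ Real.exp (-2 * v * gt L - Real.exp (-2 * x) * ∫ t in (0:ℝ)..L, Real.exp (-2 * gt t)) *
          max
            (Real.exp (2 * |v| * δ + Real.exp (-2 * x) * (1 - Real.exp (-2 * δ)) *
                ∫ t in (0:ℝ)..L, Real.exp (-2 * gt t)) - 1)
            (1 - Real.exp (-2 * |v| * δ - Real.exp (-2 * x) * (Real.exp (2 * δ) - 1) *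
                ∫ t in (0:ℝ)..L, Real.exp (-2 * gt t))) :=
  sup_norm_perturbation_estimate_general L v x δ hL g gt hg hgt hclose
end
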